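/- arXiv:1209.0287 — 2 statements merged into one kernel-verified Lean document; each statement's English description precedes it below -/
import Mathlib

section
/- The move H6 is derivable from the homotopy moves: for all words x, y, z, t and distinct letters A, B, C not occurring in them, the word xAByCAzCBt is homotopic to xBAyACzBCt. -/
/-- A Gauss word: every letter that occurs, occurs exactly twice. -/
def IsGauss (w : List ℕ) : Prop := ∀ a ∈ w, w.count a = 2

/-- Rank of a word: the number of distinct letters occurring in it. -/
def rank (w : List ℕ) : ℕ := w.dedup.length

/-- Two words are isomorphic if one is obtained from the other by an
injective (hence bijective onto its image) relabeling of letters. -/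
def Isomorphic (w₁ w₂ : List ℕ) : Prop :=
  ∃ f : ℕ → ℕ, Function.Injective f ∧ w₂ = w₁.map f

/-- One step: an isomorphism or a homotopy move H1, H2, H3. -/
inductive Move : List ℕ → List ℕ → Prop
  | iso {w₁ w₂ : List ℕ} : Isomorphic w₁ w₂ → Move w₁ w₂
  | h1 (x y : List ℕ) (A : ℕ) (hA : A ∉ x ++ y) :
      Move (x ++ [A, A] ++ y) (x ++ y)
  | h2 (x y z : List ℕ) (A B : ℕ) (hAB : A ≠ B)
      (hA : A ∉ x ++ y ++ z) (hB : B ∉ x ++ y ++ z) :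
      Move (x ++ [A, B] ++ y ++ [B, A] ++ z) (x ++ y ++ z)
  | h3 (x y z t : List ℕ) (A B C : ℕ)
      (hAB : A ≠ B) (hAC : A ≠ C) (hBC : B ≠ C)
      (hA : A ∉ x ++ y ++ z ++ t) (hB : B ∉ x ++ y ++ z ++ t)
      (hC : C ∉ x ++ y ++ z ++ t) :
      Move (x ++ [A, B] ++ y ++ [A, C] ++ z ++ [B, C] ++ t)
           (x ++ [B, A] ++ y ++ [C, A] ++ z ++ [C, B] ++ t)

/-- Homotopy: the equivalence relation generated by isomorphisms and H1–H3. -/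
def Homotopic : List ℕ → List ℕ → Prop := Relation.EqvGen Move

/-!
Write D, E, F, G for four fresh letters. Inserting the cancelling pairs DE…ED around y and
FG…GF around the middle by H2⁻¹ turns xAByCAzCBt into xABDFGEyEDCAzGFCBt. An H3 move on the
triangle D, F, C gives xABFDGEyECDAzGCFBt, in which BF…FB and then AD…DA cancel by H2, leaving
xGEyECzGCt; renaming G, E to B, A yields xBAyACzBCt.
-/

open Relation Equiv

instance : Trans Homotopic Homotopic Homotopic :=
  ⟨fun h₁ h₂ => EqvGen.trans _ _ _ h₁ h₂⟩

theorem Move.homotopic {w₁ w₂ : List ℕ} (h : Move w₁ w₂) : Homotopic w₁ w₂ :=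
  EqvGen.rel _ _ h

theorem Homotopic.symm {w₁ w₂ : List ℕ} (h : Homotopic w₁ w₂) : Homotopic w₂ w₁ :=
  EqvGen.symm _ _ h

theorem Homotopic.map_swap (w : List ℕ) (a b : ℕ) : Homotopic w (w.map (swap a b)) :=
  (Move.iso ⟨_, (swap a b).injective, rfl⟩).homotopic

theorem List.map_swap_eq_self {α : Type*} [DecidableEq α] {l : List α} {a b : α}
    (ha : a ∉ l) (hb : b ∉ l) : l.map (Equiv.swap a b) = l := by
  conv_rhs => rw [← l.map_id]
  exact List.map_congr_left fun c hc =>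
    swap_apply_of_ne_of_ne (ne_of_mem_of_not_mem hc ha) (ne_of_mem_of_not_mem hc hb)

theorem List.exists_forall_lt (l : List ℕ) : ∃ n, ∀ a ∈ l, a < n :=
  ⟨l.sum + 1, fun _ ha => Nat.lt_succ_of_le (List.le_sum_of_mem ha)⟩

/-- The derivation above, with D, E, F, G := n, n + 1, n + 2, n + 3. -/
theorem homotopic_h6_of_forall_lt (x y z t : List ℕ) (A B C n : ℕ)
    (hAB : A ≠ B) (hAC : A ≠ C) (hBC : B ≠ C)
    (hA : A ∉ x ++ y ++ z ++ t) (hB : B ∉ x ++ y ++ z ++ t) (hC : C ∉ x ++ y ++ z ++ t)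
    (hn : ∀ a ∈ x ++ y ++ z ++ t ++ [A, B, C], a < n) :
    Homotopic (x ++ [A, B] ++ y ++ [C, A] ++ z ++ [C, B] ++ t)
              (x ++ [B, A] ++ y ++ [A, C] ++ z ++ [B, C] ++ t) := by
  simp only [List.mem_append, List.mem_cons, List.not_mem_nil, or_false, or_imp, forall_and,
    forall_eq, not_or] at hA hB hC hn
  obtain ⟨⟨⟨⟨hx, hy⟩, hz⟩, ht⟩, hAn, hBn, hCn⟩ := hn
  calc Homotopic _ (x ++ [A, B, n, n + 1] ++ y ++ [n + 1, n, C, A] ++ z ++ [C, B] ++ t) := by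
        simpa using (Move.h2 (x ++ [A, B]) y ([C, A] ++ z ++ [C, B] ++ t) n (n + 1)
          (by omega) (by grind) (by grind)).homotopic.symm
    Homotopic _ (x ++ [A, B, n, n + 2, n + 3, n + 1] ++ y ++ [n + 1, n, C, A] ++ z ++
        [n + 3, n + 2, C, B] ++ t) := by
        simpa using (Move.h2 (x ++ [A, B, n]) ([n + 1] ++ y ++ [n + 1, n, C, A] ++ z) ([C, B] ++ t)
          (n + 2) (n + 3) (by omega) (by grind) (by grind)).homotopic.symm
    Homotopic _ (x ++ [A, B, n + 2, n, n + 3, n + 1] ++ y ++ [n + 1, C, n, A] ++ z ++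
        [n + 3, C, n + 2, B] ++ t) := by
        simpa using (Move.h3 (x ++ [A, B]) ([n + 3, n + 1] ++ y ++ [n + 1]) ([A] ++ z ++ [n + 3])
          ([B] ++ t) n (n + 2) C (by omega) (by omega) (by omega)
          (by grind) (by grind) (by grind)).homotopic
    Homotopic _ (x ++ [A, n, n + 3, n + 1] ++ y ++ [n + 1, C, n, A] ++ z ++ [n + 3, C] ++ t) := by
        simpa using (Move.h2 (x ++ [A]) ([n, n + 3, n + 1] ++ y ++ [n + 1, C, n, A] ++ z ++
          [n + 3, C]) t B (n + 2) (by omega) (by grind) (by grind)).homotopic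
    Homotopic _ (x ++ [n + 3, n + 1] ++ y ++ [n + 1, C] ++ z ++ [n + 3, C] ++ t) := by
        simpa using (Move.h2 x ([n + 3, n + 1] ++ y ++ [n + 1, C]) (z ++ [n + 3, C] ++ t) A n
          (by omega) (by grind) (by grind)).homotopic
    Homotopic _ (x ++ [n + 3, A] ++ y ++ [A, C] ++ z ++ [n + 3, C] ++ t) := by
        convert Homotopic.map_swap _ (n + 1) A using 1
        simp (disch := grind) [List.map_swap_eq_self, swap_apply_of_ne_of_ne]
    Homotopic _ (x ++ [B, A] ++ y ++ [A, C] ++ z ++ [B, C] ++ t) := by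
        convert Homotopic.map_swap _ (n + 3) B using 1
        simp (disch := grind) [List.map_swap_eq_self, swap_apply_of_ne_of_ne]

/-- H6 is derivable: xAByCAzCBt is homotopic to xBAyACzBCt. -/
theorem h6_derivable (x y z t : List ℕ) (A B C : ℕ)
    (hAB : A ≠ B) (hAC : A ≠ C) (hBC : B ≠ C)
    (hA : A ∉ x ++ y ++ z ++ t) (hB : B ∉ x ++ y ++ z ++ t)
    (hC : C ∉ x ++ y ++ z ++ t) :
    Homotopic (x ++ [A, B] ++ y ++ [C, A] ++ z ++ [C, B] ++ t)
              (x ++ [B, A] ++ y ++ [A, C] ++ z ++ [B, C] ++ t) := by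
  obtain ⟨n, hn⟩ := (x ++ y ++ z ++ t ++ [A, B, C]).exists_forall_lt
  exact homotopic_h6_of_forall_lt x y z t A B C n hAB hAC hBC hA hB hC hn
end

section
/- Every element of the group H_n is annihilated by 2^{n−1}; consequently H_n is a finite abelian 2-group isomorphic to a direct sum of cyclic groups of 2-power order. -/
open FreeAbelianGroup in
/-- Relators defining the truncated Polyak group `H n`: kill non-Gauss words,
the empty word and words of rank `> n` (G4), identify isomorphic words,
and impose G1, G2 and the eight-term relation G3. -/
def relators (n : ℕ) : Set (FreeAbelianGroup (List ℕ)) :=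
  {r | (∃ w : List ℕ, ¬ IsGauss w ∧ r = of w) ∨
       (r = of ([] : List ℕ)) ∨
       -- G4: words of rank greater than n are 0
       (∃ w : List ℕ, n < rank w ∧ r = of w) ∨
       -- identification of isomorphic words
       (∃ w w' : List ℕ, Isomorphic w w' ∧ r = of w - of w') ∨
       -- G1: xAAy = 0
       (∃ (x y : List ℕ) (A : ℕ), IsGauss (x ++ [A, A] ++ y) ∧
          r = of (x ++ [A, A] ++ y)) ∨
       -- G2: xAByBAz + 2·xAyAz = 0
       (∃ (x y z : List ℕ) (A B : ℕ), A ≠ B ∧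
          IsGauss (x ++ [A, B] ++ y ++ [B, A] ++ z) ∧
          r = of (x ++ [A, B] ++ y ++ [B, A] ++ z) +
              2 • of (x ++ [A] ++ y ++ [A] ++ z)) ∨
       -- G3: eight-term relation
       (∃ (x y z t : List ℕ) (A B C : ℕ), A ≠ B ∧ A ≠ C ∧ B ≠ C ∧
          IsGauss (x ++ [A, B] ++ y ++ [A, C] ++ z ++ [B, C] ++ t) ∧
          r = (of (x ++ [A, B] ++ y ++ [A, C] ++ z ++ [B, C] ++ t) +
               of (x ++ [A, B] ++ y ++ [A] ++ z ++ [B] ++ t) +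
               of (x ++ [A] ++ y ++ [A, C] ++ z ++ [C] ++ t) +
               of (x ++ [B] ++ y ++ [C] ++ z ++ [B, C] ++ t)) -
              (of (x ++ [B, A] ++ y ++ [C, A] ++ z ++ [C, B] ++ t) +
               of (x ++ [B, A] ++ y ++ [A] ++ z ++ [B] ++ t) +
               of (x ++ [A] ++ y ++ [C, A] ++ z ++ [C] ++ t) +
               of (x ++ [B] ++ y ++ [C] ++ z ++ [C, B] ++ t)))}

/-- The truncated Polyak group `H n`. -/
def H (n : ℕ) : Type :=
  FreeAbelianGroup (List ℕ) ⧸ AddSubgroup.closure (relators n)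

instance (n : ℕ) : AddCommGroup (H n) :=
  QuotientAddGroup.Quotient.addCommGroup _

/-- The class of a Gauss word in `H n`. -/
def cls (n : ℕ) (w : List ℕ) : H n :=
  QuotientAddGroup.mk (FreeAbelianGroup.of w)

theorem AddCommGroup.exists_addEquiv_pi_zmod_prime_pow {G : Type*} [AddCommGroup G] [Finite G]
    {p k : ℕ} (hp : p.Prime) (hG : ∀ x : G, p ^ k • x = 0) :
    ∃ (s : ℕ) (e : Fin s → ℕ), Nonempty (G ≃+ ((i : Fin s) → ZMod (p ^ e i))) := by
  classical
  obtain ⟨ι, _, m, -, ⟨f⟩⟩ := AddCommGroup.equiv_directSum_zmod_of_finite' G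
  let g : G ≃+ ((i : ι) → ZMod (m i)) := f.trans (DirectSum.addEquivProd _)
  have hdvd (i : ι) : m i ∣ p ^ k := by
    have h := congrFun (congrArg g (hG (g.symm (Pi.single i 1)))) i
    rw [map_nsmul, AddEquiv.apply_symm_apply, map_zero] at h
    exact (ZMod.natCast_eq_zero_iff _ _).mp (by simpa using h)
  choose e he using fun i => (Nat.dvd_prime_pow hp).mp (hdvd i)
  let σ := Fintype.equivFin ι
  refine ⟨Fintype.card ι, e ∘ σ.symm, ⟨g.trans ?_⟩⟩
  refine (AddEquiv.piCongrRight fun i => (ZMod.ringEquivCongr (he i).2).toAddEquiv).trans ?_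
  exact (RingEquiv.piCongrLeft' (fun i => ZMod (p ^ e i)) σ).toAddEquiv

theorem IsGauss.perm {w w' : List ℕ} (hw : IsGauss w) (h : w.Perm w') : IsGauss w' :=
  fun a ha => h.count_eq a ▸ hw a (h.mem_iff.mpr ha)

theorem rank_perm {w w' : List ℕ} (h : w.Perm w') : rank w = rank w' :=
  h.dedup.length_eq

theorem IsGauss.cons_cons {w : List ℕ} {b : ℕ} (hw : IsGauss w) (hb : b ∉ w) :
    IsGauss (b :: b :: w) := by
  intro a ha
  by_cases hab : a = b
  · subst hab; simp [List.count_eq_zero_of_not_mem hb]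
  · simp only [List.mem_cons, hab, false_or] at ha
    simp [Ne.symm hab, hw a ha]

theorem rank_cons_cons {w : List ℕ} {b : ℕ} (hb : b ∉ w) :
    rank (b :: b :: w) = rank w + 1 := by
  simp [rank, List.dedup_cons_of_mem, List.dedup_cons_of_notMem hb]

theorem IsGauss.eq_nil_or_eq_pair {w : List ℕ} (hw : IsGauss w) (h : rank w ≤ 1) :
    w = [] ∨ ∃ a, w = [a, a] := by
  rcases eq_or_ne w [] with hnil | hne
  · exact .inl hnil
  obtain ⟨a, ha⟩ := w.exists_mem_of_ne_nil hne
  have hall : ∀ b ∈ w, b = a := fun b hb => by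
    rw [rank, ← List.card_toFinset] at h
    exact Finset.card_le_one.mp h b (by simpa) a (by simpa)
  have hlen : w.length = 2 := (List.count_eq_length.mpr fun b hb => (hall b hb).symm) ▸ hw a ha
  exact .inr ⟨a, by rw [List.eq_replicate_of_mem hall, hlen]; rfl⟩

theorem IsGauss.length_eq_two_mul_rank {w : List ℕ} (hw : IsGauss w) :
    w.length = 2 * rank w := by
  classical
  rw [← List.sum_toFinset_count_eq_length, rank, ← List.card_toFinset,
    Finset.sum_congr rfl fun a ha => hw a (List.mem_toFinset.mp ha), Finset.sum_const,
    smul_eq_mul, mul_comm]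

theorem exists_isomorphic_forall_lt_rank (w : List ℕ) :
    ∃ w', Isomorphic w w' ∧ w'.length = w.length ∧ ∀ a ∈ w', a < rank w := by
  have hidx {c : ℕ} (hc : c ∈ w) : w.dedup.idxOf c < rank w :=
    List.idxOf_lt_length_iff.mpr (List.mem_dedup.mpr hc)
  -- letters of `w` go to their position in `w.dedup`, all others are shifted past `rank w`
  let f (a : ℕ) : ℕ := if a ∈ w then w.dedup.idxOf a else rank w + a
  have hf : Function.Injective f := by
    intro a b hab
    by_cases ha : a ∈ w <;> by_cases hb : b ∈ w <;>
      simp only [f, ha, hb, if_true, if_false] at hab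
    · exact (List.idxOf_inj (List.mem_dedup.mpr ha)).mp hab
    · have := hidx ha; omega
    · have := hidx hb; omega
    · omega
  refine ⟨w.map f, ⟨f, hf, rfl⟩, List.length_map _, fun a ha => ?_⟩
  obtain ⟨b, hb, rfl⟩ := List.mem_map.mp ha
  simpa [f, hb] using hidx hb

def normalWords (n : ℕ) : Set (List ℕ) :=
  {w | w.length ≤ 2 * n ∧ ∀ a ∈ w, a < n}

theorem normalWords_finite (n : ℕ) : (normalWords n).Finite := by
  refine ((List.finite_length_le (Fin n) (2 * n)).image (List.map Fin.val)).subset ?_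
  rintro w ⟨hlen, hlt⟩
  exact ⟨w.pmap Fin.mk hlt, by simpa using hlen, by simp [List.map_pmap]⟩

theorem mk_eq_zero_of_mem_relators {n : ℕ} {r : FreeAbelianGroup (List ℕ)}
    (h : r ∈ relators n) :
    (QuotientAddGroup.mk r : H n) = 0 :=
  (QuotientAddGroup.eq_zero_iff r).mpr (AddSubgroup.subset_closure h)

theorem cls_of_not_isGauss {n : ℕ} {w : List ℕ} (h : ¬IsGauss w) : cls n w = 0 :=
  mk_eq_zero_of_mem_relators (.inl ⟨w, h, rfl⟩)

theorem cls_nil (n : ℕ) : cls n [] = 0 :=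
  mk_eq_zero_of_mem_relators (.inr (.inl rfl))

theorem cls_of_lt_rank {n : ℕ} {w : List ℕ} (h : n < rank w) : cls n w = 0 :=
  mk_eq_zero_of_mem_relators (.inr (.inr (.inl ⟨w, h, rfl⟩)))

theorem cls_eq_of_isomorphic {n : ℕ} {w w' : List ℕ} (h : Isomorphic w w') :
    cls n w = cls n w' := by
  have := mk_eq_zero_of_mem_relators (n := n) (.inr (.inr (.inr (.inl ⟨w, w', h, rfl⟩))))
  rwa [QuotientAddGroup.mk_sub, sub_eq_zero] at this

theorem cls_G1 {n : ℕ} {x y : List ℕ} {A : ℕ} (h : IsGauss (x ++ [A, A] ++ y)) :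
    cls n (x ++ [A, A] ++ y) = 0 :=
  mk_eq_zero_of_mem_relators (.inr (.inr (.inr (.inr (.inl ⟨x, y, A, h, rfl⟩)))))

theorem cls_G2 {n : ℕ} {x y z : List ℕ} {A B : ℕ} (hAB : A ≠ B)
    (h : IsGauss (x ++ [A, B] ++ y ++ [B, A] ++ z)) :
    cls n (x ++ [A, B] ++ y ++ [B, A] ++ z) + 2 • cls n (x ++ [A] ++ y ++ [A] ++ z) = 0 := by
  have := mk_eq_zero_of_mem_relators (n := n)
    (.inr (.inr (.inr (.inr (.inr (.inl ⟨x, y, z, A, B, hAB, h, rfl⟩))))))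
  rwa [QuotientAddGroup.mk_add, QuotientAddGroup.mk_nsmul] at this

theorem exists_rank_succ_two_nsmul_cls_eq_neg (n : ℕ) {w : List ℕ} (hw : IsGauss w)
    (hne : w ≠ []) : ∃ w', rank w' = rank w + 1 ∧ 2 • cls n w = -cls n w' := by
  obtain ⟨a, t, rfl⟩ := List.exists_cons_of_ne_nil hne
  have hat : a ∈ t := by
    by_contra h
    simpa [List.count_eq_zero_of_not_mem h] using hw a List.mem_cons_self
  obtain ⟨y, z, rfl⟩ := List.append_of_mem hat
  obtain ⟨b, hb⟩ := Infinite.exists_notMem_finset (a :: (y ++ a :: z)).toFinset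
  rw [List.mem_toFinset] at hb
  -- G2 with `x = []`, `A = a` and a fresh letter `B = b`: its long word is a permutation of
  -- `b :: b :: w`.
  have hperm : ([] ++ [a, b] ++ y ++ [b, a] ++ z).Perm (b :: b :: a :: (y ++ a :: z)) := by
    simp only [List.perm_iff_count, List.count_append, List.count_cons, List.count_nil,
      List.nil_append, List.cons_append]
    omega
  refine ⟨_, (rank_perm hperm).trans (rank_cons_cons hb), ?_⟩
  have hab : a ≠ b := fun h => hb (h ▸ List.mem_cons_self)
  have hG2 := cls_G2 (n := n) hab ((hw.cons_cons hb).perm hperm.symm)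
  simpa using eq_neg_of_add_eq_zero_right hG2

theorem two_pow_nsmul_cls_eq_zero {n k : ℕ} {w : List ℕ} (h : n < rank w + k) :
    2 ^ k • cls n w = 0 := by
  induction k generalizing w with
  | zero => rw [pow_zero, one_smul, cls_of_lt_rank h]
  | succ k ih =>
    by_cases hw : IsGauss w
    · rcases eq_or_ne w [] with rfl | hne
      · rw [cls_nil, smul_zero]
      obtain ⟨w', hrank, hdouble⟩ := exists_rank_succ_two_nsmul_cls_eq_neg n hw hne
      rw [pow_succ, mul_smul, hdouble, smul_neg, ih (by omega), neg_zero]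
    · rw [cls_of_not_isGauss hw, smul_zero]

theorem cls_eq_zero_of_rank_le_one (n : ℕ) {w : List ℕ} (h : rank w ≤ 1) : cls n w = 0 := by
  by_cases hw : IsGauss w
  · rcases hw.eq_nil_or_eq_pair h with rfl | ⟨a, rfl⟩
    · exact cls_nil n
    · exact cls_G1 (x := []) (y := []) hw
  · exact cls_of_not_isGauss hw

theorem two_pow_pred_nsmul_cls (n : ℕ) (w : List ℕ) : 2 ^ (n - 1) • cls n w = 0 := by
  rcases le_or_gt (rank w) 1 with h | h
  · rw [cls_eq_zero_of_rank_le_one n h, smul_zero]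
  · exact two_pow_nsmul_cls_eq_zero (by omega)

theorem closure_range_cls (n : ℕ) : AddSubgroup.closure (Set.range (cls n)) = ⊤ := by
  refine eq_top_iff.mpr fun x _ => QuotientAddGroup.induction_on x fun a => ?_
  induction a using FreeAbelianGroup.induction_on with
  | zero => exact zero_mem _
  | of w => exact AddSubgroup.subset_closure ⟨w, rfl⟩
  | neg w h => exact neg_mem h
  | add a b ha hb => exact add_mem ha hb

theorem two_pow_pred_nsmul_eq_zero {n : ℕ} (x : H n) : 2 ^ (n - 1) • x = 0 := by
  have hx : x ∈ AddSubgroup.closure (Set.range (cls n)) := closure_range_cls n ▸ trivial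
  induction hx using AddSubgroup.closure_induction with
  | mem _ hw => obtain ⟨w, rfl⟩ := hw; exact two_pow_pred_nsmul_cls n w
  | zero => exact smul_zero _
  | add _ _ _ _ hx hy => rw [smul_add, hx, hy, add_zero]
  | neg _ _ hx => rw [smul_neg, hx, neg_zero]

theorem cls_mem_closure_normalWords (n : ℕ) (w : List ℕ) :
    cls n w ∈ AddSubgroup.closure (cls n '' normalWords n) := by
  by_cases hw : IsGauss w
  · rcases lt_or_ge n (rank w) with hr | hr
    · rw [cls_of_lt_rank hr]; exact zero_mem _
    obtain ⟨w', hiso, hlen, hlt⟩ := exists_isomorphic_forall_lt_rank w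
    rw [cls_eq_of_isomorphic hiso]
    refine AddSubgroup.subset_closure ⟨w', ⟨?_, fun a ha => (hlt a ha).trans_le hr⟩, rfl⟩
    rw [hlen, hw.length_eq_two_mul_rank]
    omega
  · rw [cls_of_not_isGauss hw]; exact zero_mem _

instance (n : ℕ) : AddGroup.FG (H n) := by
  refine AddGroup.fg_iff.mpr ⟨_, top_le_iff.mp ?_, (normalWords_finite n).image (cls n)⟩
  rw [← closure_range_cls n, AddSubgroup.closure_le]
  exact Set.range_subset_iff.mpr (cls_mem_closure_normalWords n)

instance (n : ℕ) : Finite (H n) :=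
  AddCommGroup.finite_of_fg_isAddTorsion (H n) fun x =>
    isOfFinAddOrder_iff_nsmul_eq_zero.mpr ⟨_, by positivity, two_pow_pred_nsmul_eq_zero x⟩

/-- Every element of H_n is killed by 2^(n-1); consequently H_n is a finite
abelian 2-group, isomorphic to a finite direct sum of cyclic 2-groups. -/
theorem H_two_group_structure (n : ℕ) :
    (∀ x : H n, (2 ^ (n - 1)) • x = 0) ∧
    Finite (H n) ∧
    ∃ (s : ℕ) (e : Fin s → ℕ),
      Nonempty (H n ≃+ ((i : Fin s) → ZMod (2 ^ (e i)))) :=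
  ⟨two_pow_pred_nsmul_eq_zero, inferInstance,
    AddCommGroup.exists_addEquiv_pi_zmod_prime_pow Nat.prime_two two_pow_pred_nsmul_eq_zero⟩
end
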